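/- For every p ≥ 1 and all x, y ∈ [0,1]^p with x + y ≠ 0, Δ_DML1(x,y) = Δ_JML1(x,y) / (2 − Δ_JML1(x,y)) and Δ_DML2(x,y) = Δ_JML2(x,y) / (2 − Δ_JML2(x,y)). -/

import Mathlib

open Finset

/-- The L¹ norm of a vector. -/
noncomputable def l1 {p : ℕ} (z : Fin p → ℝ) : ℝ := ∑ i, |z i|

/-- The first Dice semimetric loss. -/
noncomputable def DML1 {p : ℕ} (x y : Fin p → ℝ) : ℝ :=
  1 - (l1 (x + y) - l1 (x - y)) / l1 (x + y)

/-- The second Dice semimetric loss. -/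
noncomputable def DML2 {p : ℕ} (x y : Fin p → ℝ) : ℝ :=
  1 - 2 * l1 (x * y) / (2 * l1 (x * y) + l1 (x - y))

/-- The first Jaccard metric loss. -/
noncomputable def JML1 {p : ℕ} (x y : Fin p → ℝ) : ℝ :=
  1 - (l1 (x + y) - l1 (x - y)) / (l1 (x + y) + l1 (x - y))

/-- The second Jaccard metric loss. -/
noncomputable def JML2 {p : ℕ} (x y : Fin p → ℝ) : ℝ :=
  1 - l1 (x * y) / (l1 (x * y) + l1 (x - y))

/-- Both Dice losses have the form `1 - 2I / (U + I)` where the matching Jaccard loss is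
`1 - I / U`, with `I`, `U` playing intersection and union. -/
lemma one_sub_two_mul_div_add_eq_div {i u : ℝ} (hu : u ≠ 0) (hui : u + i ≠ 0) :
    1 - 2 * i / (u + i) = (1 - i / u) / (2 - (1 - i / u)) := by
  rw [show 2 - (1 - i / u) = (u + i) / u by field_simp; ring]
  field_simp
  ring

lemma l1_nonneg {p : ℕ} (z : Fin p → ℝ) : 0 ≤ l1 z :=
  sum_nonneg fun i _ => abs_nonneg (z i)

lemma l1_eq_zero_iff {p : ℕ} {z : Fin p → ℝ} : l1 z = 0 ↔ z = 0 := by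
  simp only [l1, sum_eq_zero_iff_of_nonneg (fun i _ => abs_nonneg (z i)), mem_univ,
    true_implies, abs_eq_zero, funext_iff, Pi.zero_apply]

lemma l1_pos {p : ℕ} {z : Fin p → ℝ} (hz : z ≠ 0) : 0 < l1 z :=
  (l1_nonneg z).lt_of_ne' (mt l1_eq_zero_iff.mp hz)

/-- If `x - y = 0` and `x * y = 0` then `x * x = 0`, so `x = y = 0`. -/
lemma l1_mul_add_l1_sub_pos {p : ℕ} {x y : Fin p → ℝ} (hxy : x + y ≠ 0) :
    0 < l1 (x * y) + l1 (x - y) := by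
  refine (add_nonneg (l1_nonneg _) (l1_nonneg _)).lt_of_ne' fun h => hxy ?_
  obtain ⟨hmul, hsub⟩ := (add_eq_zero_iff_of_nonneg (l1_nonneg _) (l1_nonneg _)).mp h
  have hyx : y = x := (sub_eq_zero.mp (l1_eq_zero_iff.mp hsub)).symm
  have hx : x = 0 := by
    funext i
    simpa [hyx] using congrFun (l1_eq_zero_iff.mp hmul) i
  simp [hyx, hx]

lemma DML1_eq_JML1_transform {p : ℕ} {x y : Fin p → ℝ} (hxy : x + y ≠ 0) :
    DML1 x y = JML1 x y / (2 - JML1 x y) := by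
  have hA : 0 < l1 (x + y) := l1_pos hxy
  have hB : 0 ≤ l1 (x - y) := l1_nonneg _
  rw [JML1, ← one_sub_two_mul_div_add_eq_div (by linarith) (by linarith), DML1,
    show l1 (x + y) + l1 (x - y) + (l1 (x + y) - l1 (x - y)) = 2 * l1 (x + y) by ring,
    mul_div_mul_left _ _ two_ne_zero]

lemma DML2_eq_JML2_transform {p : ℕ} {x y : Fin p → ℝ} (hxy : x + y ≠ 0) :
    DML2 x y = JML2 x y / (2 - JML2 x y) := by
  have hMB : 0 < l1 (x * y) + l1 (x - y) := l1_mul_add_l1_sub_pos hxy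
  have hM : 0 ≤ l1 (x * y) := l1_nonneg _
  rw [JML2, ← one_sub_two_mul_div_add_eq_div hMB.ne' (by linarith), DML2]
  ring_nf

theorem dml_eq_jml_transform_general {p : ℕ} (x y : Fin p → ℝ)
    (hxy0 : x + y ≠ 0) :
    DML1 x y = JML1 x y / (2 - JML1 x y) ∧
    DML2 x y = JML2 x y / (2 - JML2 x y) :=
  ⟨DML1_eq_JML1_transform hxy0, DML2_eq_JML2_transform hxy0⟩

/-- The Dice semimetric losses are obtained from the Jaccard metric losses via
the transform `t ↦ t / (2 - t)`. -/
theorem dml_eq_jml_transform {p : ℕ} (hp : 1 ≤ p) (x y : Fin p → ℝ)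
    (hx : ∀ i, 0 ≤ x i ∧ x i ≤ 1) (hy : ∀ i, 0 ≤ y i ∧ y i ≤ 1)
    (hxy0 : x + y ≠ 0) :
    DML1 x y = JML1 x y / (2 - JML1 x y) ∧
    DML2 x y = JML2 x y / (2 - JML2 x y) :=
  dml_eq_jml_transform_general x y hxy0
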